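/- arXiv:1806.07323 — 2 statements merged into one kernel-verified Lean document; each statement's English description precedes it below -/
import Mathlib

section
/- Let b ≠ 0 and δ ∈ ℝ with |δ| ≤ 1, let l, m be non-negative integers, and let p ∈ [1, ∞]. Then there exists a constant C > 0 such that for all t ≥ 0, ‖∂ₓˡ ∂ₜᵐ χ(·,t)‖_{L^p} ≤ C|δ|(1+t)^{-(1/2)(1 − 1/p) − l/2 − m}, where χ is the nonlinear diffusion wave with mass δ. -/
open MeasureTheory Real Filter intervalIntegral

noncomputable section

/-- Green function `S(x,t)` of the linearized generalized KdV–Burgers equation: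
the inverse Fourier transform (in the convention `𝓕⁻¹[g](x) = (2π)^{-1/2} ∫ e^{ixξ} g(ξ) dξ`)
of `ξ ↦ exp(-t ξ² + i t k ξ³)`. -/
def greenS (k t x : ℝ) : ℂ :=
  ((Real.sqrt (2 * Real.pi) : ℝ) : ℂ)⁻¹ *
    ∫ ξ : ℝ, Complex.exp (Complex.I * x * ξ) *
      Complex.exp (-(t : ℂ) * ξ ^ 2 + Complex.I * t * k * ξ ^ 3)

/-- Self-similar profile `χ_*` with mass `δ`. -/
def chiStar (b δ x : ℝ) : ℝ :=
  (1 / b) * ((Real.exp (b * δ / 2) - 1) * Real.exp (-x ^ 2 / 4)) /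
    (Real.sqrt Real.pi + (Real.exp (b * δ / 2) - 1) * ∫ y in Set.Ioi (x / 2), Real.exp (-y ^ 2))

/-- Nonlinear diffusion wave `χ(x,t) = (1+t)^{-1/2} χ_*(x/√(1+t))`. -/
def chi (b δ t x : ℝ) : ℝ := (1 + t) ^ (-(1 : ℝ) / 2) * chiStar b δ (x / Real.sqrt (1 + t))

/-- `η_*(x) = exp((b/2)∫_{-∞}^x χ_*(y) dy)`. -/
def etaStar (b δ x : ℝ) : ℝ := Real.exp ((b / 2) * ∫ y in Set.Iio x, chiStar b δ y)

/-- `η(x,t) = η_*(x/√(1+t)) = exp((b/2)∫_{-∞}^x χ(y,t) dy)`. -/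
def etaFun (b δ t x : ℝ) : ℝ := etaStar b δ (x / Real.sqrt (1 + t))

/-- Heat kernel `G(x,t)`. -/
def heatG (t x : ℝ) : ℝ := (Real.sqrt (4 * Real.pi * t))⁻¹ * Real.exp (-x ^ 2 / (4 * t))

/-- `U[h](x,t,τ) = ∫ ∂ₓ(G(x−y,t−τ)η(x,t)) η(y,τ)⁻¹ (∫_{-∞}^y h) dy`. -/
def Uker (b δ : ℝ) (h : ℝ → ℝ) (x t τ : ℝ) : ℝ :=
  ∫ y : ℝ, deriv (fun x' => heatG (t - τ) (x' - y) * etaFun b δ t x') x *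
    (etaFun b δ τ y)⁻¹ * ∫ ξ in Set.Iio y, h ξ

/-- Second asymptotic profile `Z(x,t)` with constants `cp = c_α⁺`, `cm = c_α⁻`. -/
def Zprof (b δ cp cm α : ℝ) (t x : ℝ) : ℝ :=
  ∫ y : ℝ, (if 0 ≤ y then cp else cm) *
    deriv (fun x' => heatG t (x' - y) * etaFun b δ t x') x * (1 + |y|) ^ (-(α - 1))

/-- `d = ∫ η_*(y)⁻¹ χ_*(y)³ dy`. -/
def dConst (b δ : ℝ) : ℝ := ∫ y : ℝ, (etaStar b δ y)⁻¹ * (chiStar b δ y) ^ 3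

/-- `V_*(x) = (bχ_*(x) − x)e^{-x²/4} η_*(x)`. -/
def Vstar (b δ x : ℝ) : ℝ := (b * chiStar b δ x - x) * Real.exp (-x ^ 2 / 4) * etaStar b δ x

/-- Second asymptotic profile `V(x,t)`. -/
def Vprof (b c k δ t x : ℝ) : ℝ :=
  -(dConst b δ / (4 * Real.sqrt Real.pi)) * (b ^ 2 * k / 8 + c / 3) *
    Vstar b δ (x / Real.sqrt (1 + t)) * (1 + t)⁻¹ * Real.log (1 + t)

/-- The mild (Duhamel) formulation of the generalized KdV–Burgers equation
`u_t + ((b/2)u² + (c/3)u³)_x + k u_{xxx} = u_{xx}`, `u(·,0) = u₀`. -/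
def IsMildSolution (b c k : ℝ) (u₀ : ℝ → ℝ) (u : ℝ → ℝ → ℝ) : Prop :=
  (∀ x, u 0 x = u₀ x) ∧
  ∀ t > (0 : ℝ), ∀ x : ℝ,
    (u t x : ℂ) = (∫ y : ℝ, greenS k t (x - y) * (u₀ y : ℂ)) -
      ∫ τ in (0 : ℝ)..t, ∫ y : ℝ,
        deriv (fun z => greenS k (t - τ) z) (x - y) *
          ((b / 2 : ℂ) * (u τ y : ℂ) ^ 2 + (c / 3 : ℂ) * (u τ y : ℂ) ^ 3)

/-- A global solution of the generalized KdV–Burgers equation in `C⁰([0,∞); Hˢ)`. -/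
def IsGlobalSolution (s : ℕ) (b c k : ℝ) (u₀ : ℝ → ℝ) (u : ℝ → ℝ → ℝ) : Prop :=
  (∀ t, 0 ≤ t → ContDiff ℝ s (u t) ∧ ∀ j ≤ s, MemLp (iteratedDeriv j (u t)) 2 volume) ∧
  Continuous (fun p : ℝ × ℝ => u p.1 p.2) ∧
  IsMildSolution b c k u₀ u

/-- `w₀(x) = exp(−(b/2)∫_{-∞}^x u₀) − exp(−(b/2)∫_{-∞}^x χ_*)`, with `δ = ∫ u₀`. -/
def w0 (b : ℝ) (u₀ : ℝ → ℝ) (x : ℝ) : ℝ :=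
  Real.exp (-(b / 2) * ∫ y in Set.Iio x, u₀ y) -
    Real.exp (-(b / 2) * ∫ y in Set.Iio x, chiStar b (∫ z : ℝ, u₀ z) y)

/-- `w(x,t) = exp(−(b/2)∫_{-∞}^x u(y,t)dy) − η(x,t)⁻¹`, with `δ = ∫ u₀`. -/
def wFun (b : ℝ) (u₀ : ℝ → ℝ) (u : ℝ → ℝ → ℝ) (t x : ℝ) : ℝ :=
  Real.exp (-(b / 2) * ∫ y in Set.Iio x, u t y) - (etaFun b (∫ y : ℝ, u₀ y) t x)⁻¹

end

/-!
Write `a = e^{bδ/2} - 1`. Then `χ_* = (a/b) R` with `R(z) = e^{-z²/4} / (√π + a E(z))` and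
`E(z) = ∫_{z/2}^∞ e^{-y²} dy`. Since `E' = -e^{-z²/4}/2`, `R` solves the Riccati equation
`R' = -(z/2) R + (a/2) R²`, so every derivative of `R` is `R` times a polynomial in `z` and `R`.
Such functions are `O(e^{-z²/8})`, hence in every `Lᵖ`.

By self-similarity, `∂ₜᵐ χ(x,t) = (1+t)^{-1/2-m} ψₘ(x/√(1+t))` where `ψₘ` is again of this form.
Then `∂ₓˡ` gives a factor `(1+t)^{-l/2}`, and rescaling `x` in the `Lᵖ` norm gives
`(1+t)^{1/(2p)}`. The factor `|δ|` comes from `|a/b| ≤ e^{|bδ|/2} |δ| / 2`.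
-/

open scoped ContDiff ENNReal Topology

noncomputable section

theorem hasDerivAt_integral_Ioi {E : Type*} [NormedAddCommGroup E] [NormedSpace ℝ E]
    [CompleteSpace E] {f : ℝ → E} (hf : Continuous f) (hi : Integrable f) (c : ℝ) :
    HasDerivAt (fun c => ∫ x in Set.Ioi c, f x) (-f c) c := by
  have hsplit : (fun c => ∫ x in Set.Ioi c, f x) =
      fun c => (∫ x in Set.Ioi 0, f x) - ∫ x in (0 : ℝ)..c, f x := by
    funext c
    rw [← integral_interval_add_Ioi (a := c) (b := 0) hi.integrableOn hi.integrableOn,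
      integral_symm]
    abel
  rw [hsplit]
  exact (integral_hasDerivAt_right hi.intervalIntegrable
    (hf.stronglyMeasurableAtFilter _ _) hf.continuousAt).const_sub _

theorem integrable_exp_neg_sq : Integrable fun y : ℝ => exp (-y ^ 2) := by
  simpa using integrable_exp_neg_mul_sq one_pos

theorem memLp_exp_neg_mul_sq {c : ℝ} (hc : 0 < c) (p : ℝ≥0∞) :
    MemLp (fun x : ℝ => exp (-c * x ^ 2)) p volume := by
  have hm : AEStronglyMeasurable (fun x : ℝ => exp (-c * x ^ 2)) volume :=
    (by fun_prop : Continuous fun x : ℝ => exp (-c * x ^ 2)).aestronglyMeasurable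
  rcases eq_or_ne p 0 with rfl | hp0
  · exact memLp_zero_iff_aestronglyMeasurable.2 hm
  rcases eq_or_ne p ⊤ with rfl | hptop
  · refine memLp_top_of_bound hm 1 (.of_forall fun x => ?_)
    rw [norm_of_nonneg (exp_pos _).le]
    exact exp_le_one_iff.2 (by nlinarith [sq_nonneg x])
  refine (integrable_norm_rpow_iff hm hp0 hptop).1 ?_
  have hq : 0 < p.toReal := ENNReal.toReal_pos hp0 hptop
  refine (integrable_exp_neg_mul_sq (mul_pos hc hq)).congr (.of_forall fun x => ?_)
  dsimp only
  rw [norm_of_nonneg (exp_pos _).le, ← exp_mul]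
  ring_nf

theorem one_add_sq_pow_mul_exp_le (n : ℕ) (z : ℝ) :
    (1 + z ^ 2) ^ n * exp (-z ^ 2 / 4) ≤ 8 ^ n * n.factorial * exp (1 / 8) * exp (-z ^ 2 / 8) := by
  have h := pow_div_factorial_le_exp (x := (1 + z ^ 2) / 8) (by positivity) n
  rw [div_le_iff₀ (by positivity), div_pow, div_le_iff₀ (by positivity)] at h
  have he : exp ((1 + z ^ 2) / 8) * exp (-z ^ 2 / 4) = exp (1 / 8) * exp (-z ^ 2 / 8) := by
    rw [← exp_add, ← exp_add]
    ring_nf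
  calc (1 + z ^ 2) ^ n * exp (-z ^ 2 / 4)
      ≤ exp ((1 + z ^ 2) / 8) * n.factorial * 8 ^ n * exp (-z ^ 2 / 4) := by gcongr
    _ = 8 ^ n * n.factorial * exp (1 / 8) * exp (-z ^ 2 / 8) := by
      linear_combination (8 ^ n * n.factorial : ℝ) * he

theorem eLpNorm_const_mul_comp_mul_left {g : ℝ → ℝ} (hg : AEStronglyMeasurable g volume)
    (K : ℝ) {c : ℝ} (hc : c ≠ 0) (p : ℝ≥0∞) :
    eLpNorm (fun x => K * g (c * x)) p volume =
      ENNReal.ofReal (|K| * |c⁻¹| ^ (1 / p).toReal) * eLpNorm g p volume := by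
  have hmap := map_volume_mul_left hc
  have hcomp : eLpNorm (fun x => g (c * x)) p volume =
      ENNReal.ofReal |c⁻¹| ^ (1 / p).toReal * eLpNorm g p volume := by
    rw [← Function.comp_def, ← eLpNorm_map_measure (by rw [hmap]; exact hg.smul_measure _)
      (measurable_const_mul c).aemeasurable, hmap, eLpNorm_smul_measure_of_ne_zero
      (by simpa using hc), smul_eq_mul]
  rw [show (fun x => K * g (c * x)) = K • fun x => g (c * x) from rfl, eLpNorm_const_smul, hcomp,
    ← mul_assoc, ENNReal.ofReal_mul (abs_nonneg _),
    ENNReal.ofReal_rpow_of_nonneg (abs_nonneg _) ENNReal.toReal_nonneg, Real.enorm_eq_ofReal_abs]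

theorem eLpNorm_iteratedDeriv_const_mul_comp_mul_left {ψ : ℝ → ℝ} {l : ℕ} (hψ : ContDiff ℝ l ψ)
    (K : ℝ) {c : ℝ} (hc : 0 < c) (p : ℝ≥0∞) :
    eLpNorm (fun x => iteratedDeriv l (fun y => K * ψ (c * y)) x) p volume =
      ENNReal.ofReal (|K| * c ^ l * c⁻¹ ^ (1 / p).toReal) *
        eLpNorm (iteratedDeriv l ψ) p volume := by
  simp only [iteratedDeriv_const_mul_field, iteratedDeriv_comp_const_mul hψ, ← mul_assoc]
  rw [eLpNorm_const_mul_comp_mul_left (hψ.continuous_iteratedDeriv l le_rfl).aestronglyMeasurable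
    _ hc.ne', abs_mul, abs_pow, abs_of_pos hc, abs_of_pos (inv_pos.2 hc)]

theorem rpow_mul_inv_sqrt_pow_mul_sqrt_rpow {s : ℝ} (hs : 0 < s) (c r : ℝ) (l : ℕ) :
    s ^ c * (√s)⁻¹ ^ l * √s ^ r = s ^ (c - l / 2 + r / 2) := by
  have hσ : 0 < √s := sqrt_pos.2 hs
  rw [← rpow_natCast, inv_rpow hσ.le, ← rpow_neg hσ.le, mul_assoc, ← rpow_add hσ, sqrt_eq_rpow,
    ← rpow_mul hs.le, ← rpow_add hs]
  ring_nf

theorem neg_one_lt_exp_sub_one (x : ℝ) : -1 < exp x - 1 := by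
  linarith [exp_pos x]

theorem abs_exp_sub_one_le_abs_mul_exp_abs (x : ℝ) : |exp x - 1| ≤ |x| * exp |x| := by
  rcases le_or_gt 0 x with hx | hx
  · rw [abs_of_nonneg hx, abs_of_nonneg (by linarith [one_le_exp hx])]
    nlinarith [add_one_le_exp (-x), exp_pos x, exp_neg x, mul_inv_cancel₀ (exp_pos x).ne']
  · rw [abs_of_neg hx, abs_of_nonpos (by linarith [exp_lt_one_iff.2 hx])]
    nlinarith [add_one_le_exp x, one_le_exp (neg_nonneg.2 hx.le)]

def polynomialGrowth : Subalgebra ℝ (ℝ → ℝ) where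
  carrier := {f | ∃ C : ℝ, ∃ n : ℕ, ∀ z, |f z| ≤ C * (1 + z ^ 2) ^ n}
  mul_mem' := by
    rintro f g ⟨C₁, n₁, hf⟩ ⟨C₂, n₂, hg⟩
    refine ⟨C₁ * C₂, n₁ + n₂, fun z => ?_⟩
    calc |f z * g z| = |f z| * |g z| := abs_mul _ _
      _ ≤ (C₁ * (1 + z ^ 2) ^ n₁) * (C₂ * (1 + z ^ 2) ^ n₂) :=
        mul_le_mul (hf z) (hg z) (abs_nonneg _) ((abs_nonneg _).trans (hf z))
      _ = C₁ * C₂ * (1 + z ^ 2) ^ (n₁ + n₂) := by ring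
  add_mem' := by
    rintro f g ⟨C₁, n₁, hf⟩ ⟨C₂, n₂, hg⟩
    refine ⟨|C₁| + |C₂|, max n₁ n₂, fun z => ?_⟩
    have hz : (1 : ℝ) ≤ 1 + z ^ 2 := le_add_of_nonneg_right (sq_nonneg z)
    calc |f z + g z| ≤ |f z| + |g z| := abs_add_le _ _
      _ ≤ |C₁| * (1 + z ^ 2) ^ n₁ + |C₂| * (1 + z ^ 2) ^ n₂ := by
        gcongr
        · exact (hf z).trans (by gcongr; exact le_abs_self _)
        · exact (hg z).trans (by gcongr; exact le_abs_self _)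
      _ ≤ |C₁| * (1 + z ^ 2) ^ max n₁ n₂ + |C₂| * (1 + z ^ 2) ^ max n₁ n₂ := by
        gcongr <;> simp
      _ = (|C₁| + |C₂|) * (1 + z ^ 2) ^ max n₁ n₂ := by ring
  algebraMap_mem' r := ⟨|r|, 0, fun z => by simp⟩

def timeProfile (φ : ℝ → ℝ) : ℕ → ℝ → ℝ
  | 0 => φ
  | m + 1 => fun z => (-(1 : ℝ) / 2 - m) * timeProfile φ m z - z / 2 * deriv (timeProfile φ m) z

theorem timeProfile_const_smul (c : ℝ) (φ : ℝ → ℝ) (m : ℕ) :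
    timeProfile (c • φ) m = c • timeProfile φ m := by
  induction m with
  | zero => rfl
  | succ m ih =>
    funext z
    simp only [timeProfile, ih, deriv_const_smul_field, Pi.smul_apply, smul_eq_mul]
    ring

theorem hasDerivAt_rpow_mul_comp_div_sqrt {ψ : ℝ → ℝ} (hψ : Differentiable ℝ ψ) (c x : ℝ) {t : ℝ}
    (ht : -1 < t) :
    HasDerivAt (fun t => (1 + t) ^ c * ψ (x / √(1 + t)))
      ((1 + t) ^ (c - 1) * (c * ψ (x / √(1 + t)) - x / √(1 + t) / 2 * deriv ψ (x / √(1 + t))))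
      t := by
  have hs : 0 < 1 + t := by linarith
  have hσ : 0 < √(1 + t) := sqrt_pos.2 hs
  have hone : HasDerivAt (fun t : ℝ => 1 + t) 1 t := (hasDerivAt_id t).const_add 1
  have hpow := (hasDerivAt_rpow_const (p := c) (Or.inl hs.ne')).comp t hone
  have hz := (hasDerivAt_const t x).div ((hasDerivAt_sqrt hs.ne').comp t hone) hσ.ne'
  have h := hpow.mul ((hψ _).hasDerivAt.comp t hz)
  refine h.congr_deriv ?_
  simp only [Function.comp_apply, Pi.div_apply, mul_one]
  rw [rpow_sub_one hs.ne', sq_sqrt hs.le]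
  field_simp
  ring

theorem iteratedDeriv_rpow_mul_comp_div_sqrt {φ : ℝ → ℝ}
    (hφ : ∀ m, Differentiable ℝ (timeProfile φ m)) (x : ℝ) (m : ℕ) {t : ℝ} (ht : -1 < t) :
    iteratedDeriv m (fun t => (1 + t) ^ (-(1 : ℝ) / 2) * φ (x / √(1 + t))) t =
      (1 + t) ^ (-(1 : ℝ) / 2 - m) * timeProfile φ m (x / √(1 + t)) := by
  induction m generalizing t with
  | zero => simp [timeProfile]
  | succ m ih =>
    have hev : iteratedDeriv m (fun t => (1 + t) ^ (-(1 : ℝ) / 2) * φ (x / √(1 + t))) =ᶠ[𝓝 t]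
        fun t => (1 + t) ^ (-(1 : ℝ) / 2 - m) * timeProfile φ m (x / √(1 + t)) :=
      eventually_of_mem (isOpen_Ioi.mem_nhds ht) fun _ hs => ih hs
    rw [iteratedDeriv_succ, hev.deriv_eq,
      (hasDerivAt_rpow_mul_comp_div_sqrt (hφ m) _ x ht).deriv]
    push_cast
    simp only [timeProfile]
    ring_nf

def gaussTail (z : ℝ) : ℝ := ∫ y in Set.Ioi (z / 2), exp (-y ^ 2)

theorem hasDerivAt_gaussTail (z : ℝ) :
    HasDerivAt gaussTail (-exp (-z ^ 2 / 4) / 2) z := by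
  have h := (hasDerivAt_integral_Ioi (by fun_prop) integrable_exp_neg_sq (z / 2)).comp z
    ((hasDerivAt_id z).div_const 2)
  refine (h : HasDerivAt gaussTail _ z).congr_deriv ?_
  ring_nf

theorem gaussTail_nonneg (z : ℝ) : 0 ≤ gaussTail z :=
  setIntegral_nonneg measurableSet_Ioi fun _ _ => (exp_pos _).le

theorem gaussTail_le_sqrt_pi (z : ℝ) : gaussTail z ≤ √π := by
  calc gaussTail z ≤ ∫ y, exp (-y ^ 2) :=
        setIntegral_le_integral integrable_exp_neg_sq (.of_forall fun _ => (exp_pos _).le)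
    _ = √π := by simpa using integral_gaussian 1

def burgersDenom (a z : ℝ) : ℝ := √π + a * gaussTail z

def burgersProfile (a z : ℝ) : ℝ := exp (-z ^ 2 / 4) / burgersDenom a z

theorem sqrt_pi_mul_min_le_burgersDenom (a z : ℝ) : √π * min 1 (1 + a) ≤ burgersDenom a z := by
  unfold burgersDenom
  rcases le_or_gt 0 a with ha | ha
  · nlinarith [min_le_left 1 (1 + a), mul_nonneg ha (gaussTail_nonneg z), sqrt_nonneg π]
  · nlinarith [min_le_right 1 (1 + a), mul_le_mul_of_nonpos_left (gaussTail_le_sqrt_pi z) ha.le,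
      sqrt_nonneg π]

theorem burgersDenom_pos {a : ℝ} (ha : -1 < a) (z : ℝ) : 0 < burgersDenom a z :=
  lt_of_lt_of_le (by positivity [lt_min one_pos (by linarith : 0 < 1 + a)])
    (sqrt_pi_mul_min_le_burgersDenom a z)

theorem hasDerivAt_burgersProfile {a : ℝ} (ha : -1 < a) (z : ℝ) :
    HasDerivAt (burgersProfile a)
      (-(z / 2) * burgersProfile a z + a / 2 * burgersProfile a z ^ 2) z := by
  have hD : HasDerivAt (burgersDenom a) (a * (-exp (-z ^ 2 / 4) / 2)) z :=
    ((hasDerivAt_gaussTail z).const_mul a).const_add √π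
  have hN : HasDerivAt (fun z : ℝ => exp (-z ^ 2 / 4)) (-(z / 2) * exp (-z ^ 2 / 4)) z := by
    convert (((hasDerivAt_id' z).fun_pow 2).fun_neg.div_const 4).exp using 1
    push_cast
    ring
  have hD0 := (burgersDenom_pos ha z).ne'
  refine (hN.div hD hD0 : HasDerivAt (burgersProfile a) _ z).congr_deriv ?_
  simp only [burgersProfile]
  field_simp
  ring

theorem burgersProfile_nonneg {a : ℝ} (ha : -1 < a) (z : ℝ) : 0 ≤ burgersProfile a z :=
  div_nonneg (exp_pos _).le (burgersDenom_pos ha z).le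

theorem burgersProfile_le {a : ℝ} (ha : -1 < a) (z : ℝ) :
    burgersProfile a z ≤ (√π * min 1 (1 + a))⁻¹ * exp (-z ^ 2 / 4) := by
  rw [burgersProfile, div_eq_inv_mul]
  gcongr
  · exact mul_pos (by positivity) (lt_min one_pos (by linarith))
  · exact sqrt_pi_mul_min_le_burgersDenom a z

def profileAlgebra (a : ℝ) : Subalgebra ℝ (ℝ → ℝ) := Algebra.adjoin ℝ {id, burgersProfile a}

def profileIdeal (a : ℝ) : Submodule ℝ (ℝ → ℝ) :=
  (profileAlgebra a).toSubmodule.map (LinearMap.mulLeft ℝ (burgersProfile a))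

section ProfileAlgebra

variable {a : ℝ}

theorem id_mem_profileAlgebra : id ∈ profileAlgebra a := Algebra.subset_adjoin (by simp)

theorem burgersProfile_mem_profileAlgebra : burgersProfile a ∈ profileAlgebra a :=
  Algebra.subset_adjoin (by simp)

theorem profileAlgebra_le_polynomialGrowth (ha : -1 < a) : profileAlgebra a ≤ polynomialGrowth := by
  refine Algebra.adjoin_le ?_
  rintro f (rfl | rfl)
  · refine ⟨1, 1, fun z => ?_⟩
    simp only [id, one_mul, pow_one]
    nlinarith [abs_nonneg z, sq_abs z]
  · refine ⟨(√π * min 1 (1 + a))⁻¹, 0, fun z => ?_⟩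
    rw [abs_of_nonneg (burgersProfile_nonneg ha z), pow_zero, mul_one]
    refine (burgersProfile_le ha z).trans (mul_le_of_le_one_right ?_ ?_)
    · exact inv_nonneg.2 (mul_nonneg (sqrt_nonneg π) (le_min zero_le_one (by linarith)))
    · exact exp_le_one_iff.2 (by nlinarith)

theorem exists_hasDerivAt_mem_profileAlgebra (ha : -1 < a) {f : ℝ → ℝ}
    (hf : f ∈ profileAlgebra a) : ∃ f' ∈ profileAlgebra a, ∀ z, HasDerivAt f (f' z) z := by
  induction hf using Algebra.adjoin_induction with
  | mem f hf =>
    rcases hf with rfl | rfl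
    · exact ⟨1, one_mem _, hasDerivAt_id⟩
    · refine ⟨(-(1 / 2) : ℝ) • (id * burgersProfile a) + (a / 2) • burgersProfile a ^ 2, ?_, ?_⟩
      · exact add_mem (Subalgebra.smul_mem _ (mul_mem id_mem_profileAlgebra
          burgersProfile_mem_profileAlgebra) _) (Subalgebra.smul_mem _
          (pow_mem burgersProfile_mem_profileAlgebra 2) _)
      · intro z
        convert hasDerivAt_burgersProfile ha z using 1
        simp only [Pi.add_apply, Pi.smul_apply, Pi.mul_apply, Pi.pow_apply, id, smul_eq_mul]
        ring
  | algebraMap r => exact ⟨0, zero_mem _, fun z => hasDerivAt_const z r⟩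
  | add f g _ _ hf hg =>
    obtain ⟨f', hf', hdf⟩ := hf
    obtain ⟨g', hg', hdg⟩ := hg
    exact ⟨f' + g', add_mem hf' hg', fun z => (hdf z).add (hdg z)⟩
  | mul f g hfA hgA hf hg =>
    obtain ⟨f', hf', hdf⟩ := hf
    obtain ⟨g', hg', hdg⟩ := hg
    exact ⟨f' * g + f * g', add_mem (mul_mem hf' hgA) (mul_mem hfA hg'),
      fun z => (hdf z).mul (hdg z)⟩

theorem differentiable_of_mem_profileAlgebra (ha : -1 < a) {f : ℝ → ℝ}
    (hf : f ∈ profileAlgebra a) : Differentiable ℝ f := by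
  obtain ⟨_, _, hd⟩ := exists_hasDerivAt_mem_profileAlgebra ha hf
  exact fun z => (hd z).differentiableAt

theorem deriv_mem_profileAlgebra (ha : -1 < a) {f : ℝ → ℝ} (hf : f ∈ profileAlgebra a) :
    deriv f ∈ profileAlgebra a := by
  obtain ⟨f', hf', hd⟩ := exists_hasDerivAt_mem_profileAlgebra ha hf
  rwa [show deriv f = f' from funext fun z => (hd z).deriv]

theorem contDiff_of_mem_profileAlgebra (ha : -1 < a) {f : ℝ → ℝ} (hf : f ∈ profileAlgebra a) :
    ContDiff ℝ ∞ f := by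
  refine contDiff_infty.2 fun n => ?_
  induction n generalizing f with
  | zero => exact contDiff_zero.2 (differentiable_of_mem_profileAlgebra ha hf).continuous
  | succ n ih =>
    exact contDiff_succ_iff_deriv.2 ⟨differentiable_of_mem_profileAlgebra ha hf,
      by simp, ih (deriv_mem_profileAlgebra ha hf)⟩

theorem mem_profileIdeal {f : ℝ → ℝ} :
    f ∈ profileIdeal a ↔ ∃ g ∈ profileAlgebra a, burgersProfile a * g = f :=
  Submodule.mem_map

theorem burgersProfile_mem_profileIdeal : burgersProfile a ∈ profileIdeal a :=
  mem_profileIdeal.2 ⟨1, one_mem _, mul_one _⟩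

theorem mem_profileAlgebra_of_mem_profileIdeal {f : ℝ → ℝ} (hf : f ∈ profileIdeal a) :
    f ∈ profileAlgebra a := by
  obtain ⟨g, hg, rfl⟩ := mem_profileIdeal.1 hf
  exact mul_mem burgersProfile_mem_profileAlgebra hg

theorem contDiff_of_mem_profileIdeal (ha : -1 < a) {f : ℝ → ℝ} (hf : f ∈ profileIdeal a) :
    ContDiff ℝ ∞ f :=
  contDiff_of_mem_profileAlgebra ha (mem_profileAlgebra_of_mem_profileIdeal hf)

theorem mul_mem_profileIdeal {f g : ℝ → ℝ} (hg : g ∈ profileAlgebra a) (hf : f ∈ profileIdeal a) :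
    g * f ∈ profileIdeal a := by
  obtain ⟨h, hh, rfl⟩ := mem_profileIdeal.1 hf
  exact mem_profileIdeal.2 ⟨g * h, mul_mem hg hh, by ring⟩

theorem deriv_mem_profileIdeal (ha : -1 < a) {f : ℝ → ℝ} (hf : f ∈ profileIdeal a) :
    deriv f ∈ profileIdeal a := by
  obtain ⟨g, hg, rfl⟩ := mem_profileIdeal.1 hf
  obtain ⟨g', hg', hdg⟩ := exists_hasDerivAt_mem_profileAlgebra ha hg
  -- `R' = R · (a R / 2 - z / 2)`, so the factor `R` survives differentiation.
  set q : ℝ → ℝ := (a / 2) • burgersProfile a - (1 / 2 : ℝ) • id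
  have hq : q ∈ profileAlgebra a := sub_mem
    (Subalgebra.smul_mem _ burgersProfile_mem_profileAlgebra _)
    (Subalgebra.smul_mem _ id_mem_profileAlgebra _)
  have hd : deriv (burgersProfile a * g) = burgersProfile a * (q * g + g') := by
    funext z
    rw [((hasDerivAt_burgersProfile ha z).mul (hdg z)).deriv]
    simp only [q, Pi.add_apply, Pi.sub_apply, Pi.smul_apply, Pi.mul_apply, id, smul_eq_mul]
    ring
  rw [hd]
  exact mem_profileIdeal.2 ⟨_, add_mem (mul_mem hq hg) hg', rfl⟩

theorem iteratedDeriv_mem_profileIdeal (ha : -1 < a) {f : ℝ → ℝ} (hf : f ∈ profileIdeal a)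
    (n : ℕ) : iteratedDeriv n f ∈ profileIdeal a := by
  induction n with
  | zero => simpa using hf
  | succ n ih => exact iteratedDeriv_succ (f := f) ▸ deriv_mem_profileIdeal ha ih

theorem exists_abs_le_mul_exp_of_mem_profileIdeal (ha : -1 < a) {f : ℝ → ℝ}
    (hf : f ∈ profileIdeal a) : ∃ C, ∀ z, |f z| ≤ C * exp (-z ^ 2 / 8) := by
  obtain ⟨g, hg, rfl⟩ := mem_profileIdeal.1 hf
  obtain ⟨C, n, hC⟩ := profileAlgebra_le_polynomialGrowth ha hg
  set K := (√π * min 1 (1 + a))⁻¹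
  have hK : 0 ≤ K := inv_nonneg.2 (mul_nonneg (sqrt_nonneg π) (le_min zero_le_one (by linarith)))
  refine ⟨K * C * (8 ^ n * n.factorial * exp (1 / 8)), fun z => ?_⟩
  have hC0 : 0 ≤ C := by simpa using (abs_nonneg _).trans (hC 0)
  calc |(burgersProfile a * g) z| = burgersProfile a z * |g z| := by
        rw [Pi.mul_apply, abs_mul, abs_of_nonneg (burgersProfile_nonneg ha z)]
    _ ≤ (K * exp (-z ^ 2 / 4)) * (C * (1 + z ^ 2) ^ n) :=
        mul_le_mul (burgersProfile_le ha z) (hC z) (abs_nonneg _) (by positivity)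
    _ = K * C * ((1 + z ^ 2) ^ n * exp (-z ^ 2 / 4)) := by ring
    _ ≤ K * C * (8 ^ n * n.factorial * exp (1 / 8) * exp (-z ^ 2 / 8)) := by
        gcongr ?_ * ?_
        exact one_add_sq_pow_mul_exp_le n z
    _ = _ := by ring

theorem memLp_of_mem_profileIdeal (ha : -1 < a) {f : ℝ → ℝ} (hf : f ∈ profileIdeal a)
    (p : ℝ≥0∞) : MemLp f p volume := by
  obtain ⟨C, hC⟩ := exists_abs_le_mul_exp_of_mem_profileIdeal ha hf
  refine ((memLp_exp_neg_mul_sq (c := 1 / 8) (by norm_num) p).const_mul C).of_le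
    (contDiff_of_mem_profileIdeal ha hf).continuous.aestronglyMeasurable (.of_forall fun z => ?_)
  rw [Real.norm_eq_abs, Real.norm_eq_abs]
  calc |f z| ≤ C * exp (-z ^ 2 / 8) := hC z
    _ = C * exp (-(1 / 8) * z ^ 2) := by ring_nf
    _ ≤ |C * exp (-(1 / 8) * z ^ 2)| := le_abs_self _

theorem timeProfile_mem_profileIdeal (ha : -1 < a) {φ : ℝ → ℝ}
    (hφ : φ ∈ profileIdeal a) (m : ℕ) : timeProfile φ m ∈ profileIdeal a := by
  induction m with
  | zero => exact hφ
  | succ m ih =>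
    have h : timeProfile φ (m + 1) =
        (-(1 : ℝ) / 2 - m) • timeProfile φ m + (-(1 / 2 : ℝ)) • (id * deriv (timeProfile φ m)) := by
      funext z
      simp only [timeProfile, Pi.add_apply, Pi.smul_apply, Pi.mul_apply, id, smul_eq_mul]
      ring
    rw [h]
    exact add_mem (Submodule.smul_mem _ _ ih) (Submodule.smul_mem _ _
      (mul_mem_profileIdeal id_mem_profileAlgebra (deriv_mem_profileIdeal ha ih)))

end ProfileAlgebra

theorem chiStar_eq (b δ : ℝ) :
    chiStar b δ = ((exp (b * δ / 2) - 1) / b) • burgersProfile (exp (b * δ / 2) - 1) := by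
  funext z
  simp only [chiStar, Pi.smul_apply, smul_eq_mul, burgersProfile, burgersDenom, gaussTail]
  ring

theorem abs_exp_sub_one_div_le (b δ : ℝ) :
    |(exp (b * δ / 2) - 1) / b| ≤ exp (|b * δ| / 2) / 2 * |δ| := by
  rcases eq_or_ne b 0 with rfl | hb
  · simp
  rw [abs_div, div_le_iff₀ (abs_pos.2 hb)]
  calc |exp (b * δ / 2) - 1| ≤ |b * δ / 2| * exp |b * δ / 2| :=
        abs_exp_sub_one_le_abs_mul_exp_abs _
    _ = exp (|b * δ| / 2) / 2 * |δ| * |b| := by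
        rw [abs_div, abs_two, abs_mul]
        ring

theorem iteratedDeriv_chi (b δ x : ℝ) (m : ℕ) {t : ℝ} (ht : -1 < t) :
    iteratedDeriv m (fun t' => chi b δ t' x) t =
      (1 + t) ^ (-(1 : ℝ) / 2 - m) * ((exp (b * δ / 2) - 1) / b) *
        timeProfile (burgersProfile (exp (b * δ / 2) - 1)) m ((√(1 + t))⁻¹ * x) := by
  have ha := neg_one_lt_exp_sub_one (b * δ / 2)
  have hdiff (k : ℕ) : Differentiable ℝ (timeProfile (chiStar b δ) k) := by
    rw [chiStar_eq, timeProfile_const_smul]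
    exact ((contDiff_of_mem_profileIdeal ha (timeProfile_mem_profileIdeal ha
      burgersProfile_mem_profileIdeal k)).differentiable (by simp)).const_smul _
  rw [show (fun t' => chi b δ t' x) = fun t' => (1 + t') ^ (-(1 : ℝ) / 2) *
      chiStar b δ (x / √(1 + t')) from rfl, iteratedDeriv_rpow_mul_comp_div_sqrt hdiff x m ht,
    chiStar_eq, timeProfile_const_smul, Pi.smul_apply, smul_eq_mul, inv_mul_eq_div]
  ring

theorem eLpNorm_iteratedDeriv_chi (b δ : ℝ) (l m : ℕ) (p : ℝ≥0∞) {t : ℝ} (ht : -1 < t) :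
    eLpNorm (fun x => iteratedDeriv l (fun x' => iteratedDeriv m (fun t' => chi b δ t' x') t) x)
        p volume =
      ENNReal.ofReal (|(exp (b * δ / 2) - 1) / b| *
          (1 + t) ^ (-(1 / 2 : ℝ) * (1 - (1 / p).toReal) - (l : ℝ) / 2 - (m : ℝ))) *
        eLpNorm (iteratedDeriv l (timeProfile (burgersProfile (exp (b * δ / 2) - 1)) m))
          p volume := by
  have ha := neg_one_lt_exp_sub_one (b * δ / 2)
  have hs : 0 < 1 + t := by linarith
  have hψ := timeProfile_mem_profileIdeal ha burgersProfile_mem_profileIdeal m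
  simp only [iteratedDeriv_chi b δ _ m ht]
  rw [eLpNorm_iteratedDeriv_const_mul_comp_mul_left
      (contDiff_infty.1 (contDiff_of_mem_profileIdeal ha hψ) l) _ (inv_pos.2 (sqrt_pos.2 hs)),
    inv_inv, abs_mul, abs_of_pos (rpow_pos_of_pos hs _), mul_comm _ |_|, mul_assoc, mul_assoc,
    ← mul_assoc (_ ^ _), rpow_mul_inv_sqrt_pow_mul_sqrt_rpow hs]
  ring_nf

end

theorem stmt5_general (b δ : ℝ) (l m : ℕ)
    (p : ENNReal) :
    ∃ C > (0 : ℝ), ∀ t : ℝ, 0 ≤ t →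
      eLpNorm
        (fun x => iteratedDeriv l (fun x' => iteratedDeriv m (fun t' => chi b δ t' x') t) x)
        p volume ≤
        ENNReal.ofReal
          (C * |δ| * (1 + t) ^ (-(1 / 2 : ℝ) * (1 - (1 / p).toReal) - (l : ℝ) / 2 - (m : ℝ))) := by
  have ha := neg_one_lt_exp_sub_one (b * δ / 2)
  have hψ := timeProfile_mem_profileIdeal ha burgersProfile_mem_profileIdeal m
  have hψ_Lp := memLp_of_mem_profileIdeal ha (iteratedDeriv_mem_profileIdeal ha hψ l) p
  set N := (eLpNorm (iteratedDeriv l (timeProfile (burgersProfile (exp (b * δ / 2) - 1)) m))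
    p volume).toReal
  refine ⟨exp (|b * δ| / 2) / 2 * (N + 1), by positivity, fun t ht => ?_⟩
  rw [eLpNorm_iteratedDeriv_chi b δ l m p (by linarith), ← ENNReal.ofReal_toReal
    hψ_Lp.eLpNorm_ne_top, ← ENNReal.ofReal_mul (by positivity)]
  refine ENNReal.ofReal_le_ofReal ?_
  calc |(exp (b * δ / 2) - 1) / b| *
        (1 + t) ^ (-(1 / 2 : ℝ) * (1 - (1 / p).toReal) - (l : ℝ) / 2 - (m : ℝ)) * N
      ≤ exp (|b * δ| / 2) / 2 * |δ| *
        (1 + t) ^ (-(1 / 2 : ℝ) * (1 - (1 / p).toReal) - (l : ℝ) / 2 - (m : ℝ)) * (N + 1) := by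
        gcongr
        · exact abs_exp_sub_one_div_le b δ
        · linarith
    _ = _ := by ring

/-- Lemma 2.4 (first part): for `p ∈ [1,∞]`,
`‖∂ₓˡ∂ₜᵐ χ(·,t)‖_{L^p} ≤ C|δ|(1+t)^{-(1/2)(1-1/p) - l/2 - m}` for `t ≥ 0`. -/
theorem stmt5 (b δ : ℝ) (hb : b ≠ 0) (hδ : |δ| ≤ 1) (l m : ℕ)
    (p : ENNReal) (hp : 1 ≤ p) :
    ∃ C > (0 : ℝ), ∀ t : ℝ, 0 ≤ t →
      eLpNorm
        (fun x => iteratedDeriv l (fun x' => iteratedDeriv m (fun t' => chi b δ t' x') t) x)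
        p volume ≤
        ENNReal.ofReal
          (C * |δ| * (1 + t) ^ (-(1 / 2 : ℝ) * (1 - (1 / p).toReal) - (l : ℝ) / 2 - (m : ℝ))) :=
  stmt5_general b δ l m p
end

section
/- Let 1 < α ≤ 2 and let l be a non-negative integer. Let G(x,t) ≡ (4πt)^{-1/2} e^{-x²/4t} denote the heat kernel. Then there exists a constant C > 0 such that for all t ≥ 1 and all x ∈ ℝ: ∫_ℝ |∂ₓˡ G(x−y, t)| (1+|y|)^{-(α-1)} dy ≤ C(1+t)^{-(α-1)/2 − l/2} when 1 < α < 2, and ∫_ℝ |∂ₓˡ G(x−y, t)| (1+|y|)^{-(α-1)} dy ≤ C(1+t)^{-1/2 − l/2} log(2+t) when α = 2. -/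
open MeasureTheory Real Filter intervalIntegral

/-!
The `l`-th derivative of `G(·, t)` at `x - y` is `t^{-(l+1)/2}` times a Hermite polynomial times a
Gaussian in `(x - y)/√(2t)`, hence at most `M t^{-(l+1)/2} e^{-(x-y)²/8t}`. Split the `y`-integral at
`|y| = √t`: inside, the Gaussian is at most `1` and the weight integrates to
`2∫₀^{√t} (1+u)^{1-α} du`, which is `O(t^{(2-α)/2})` for `α < 2` and `log(1 + √t)` for `α = 2`;
outside, the weight is at most `(1+√t)^{1-α}` and the Gaussian has mass `√(8πt)`.
-/

open Polynomial
open scoped Nat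

lemma abs_pow_le_factorial_mul_exp_sq (u : ℝ) (i : ℕ) :
    |u| ^ i ≤ i ! * exp 1 * exp (u ^ 2 / 4) := by
  have h_amgm : |u| ≤ u ^ 2 / 4 + 1 := by nlinarith [sq_nonneg (|u| - 2), sq_abs u]
  calc |u| ^ i ≤ i ! * exp |u| := by
        have := pow_div_factorial_le_exp |u| (abs_nonneg u) i
        rwa [div_le_iff₀' (by positivity)] at this
    _ ≤ i ! * exp (u ^ 2 / 4 + 1) := by gcongr
    _ = i ! * exp 1 * exp (u ^ 2 / 4) := by rw [exp_add]; ring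

lemma Polynomial.exists_abs_aeval_le_mul_exp_sq (p : ℤ[X]) :
    ∃ M > 0, ∀ u : ℝ, |aeval u p| ≤ M * exp (u ^ 2 / 4) := by
  set K := ∑ i ∈ Finset.range (p.natDegree + 1), |(p.coeff i : ℝ)| * (i ! * exp 1)
  have hK : 0 ≤ K := Finset.sum_nonneg fun i _ => by positivity
  refine ⟨K + 1, by positivity, fun u => ?_⟩
  calc |aeval u p| = |∑ i ∈ Finset.range (p.natDegree + 1), (p.coeff i : ℝ) * u ^ i| := by
        simp [aeval_eq_sum_range, zsmul_eq_mul]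
    _ ≤ ∑ i ∈ Finset.range (p.natDegree + 1), |(p.coeff i : ℝ)| * |u| ^ i := by
        refine (Finset.abs_sum_le_sum_abs _ _).trans_eq ?_
        simp only [abs_mul, abs_pow]
    _ ≤ ∑ i ∈ Finset.range (p.natDegree + 1),
          |(p.coeff i : ℝ)| * (i ! * exp 1 * exp (u ^ 2 / 4)) := by
        gcongr with i
        exact abs_pow_le_factorial_mul_exp_sq u i
    _ = K * exp (u ^ 2 / 4) := by simp only [K, Finset.sum_mul, mul_assoc]
    _ ≤ (K + 1) * exp (u ^ 2 / 4) := by gcongr; linarith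

lemma exists_abs_iteratedDeriv_gaussian_le (l : ℕ) :
    ∃ M > 0, ∀ u : ℝ,
      |iteratedDeriv l (fun u => exp (-(u ^ 2 / 2))) u| ≤ M * exp (-(u ^ 2 / 4)) := by
  obtain ⟨M, hM, hp⟩ := (hermite l).exists_abs_aeval_le_mul_exp_sq
  refine ⟨M, hM, fun u => ?_⟩
  rw [iteratedDeriv_eq_iterate, deriv_gaussian_eq_hermite_mul_gaussian, abs_mul, abs_mul,
    abs_pow, abs_neg, abs_one, one_pow, one_mul, abs_exp]
  calc |aeval u (hermite l)| * exp (-(u ^ 2 / 2))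
      ≤ M * exp (u ^ 2 / 4) * exp (-(u ^ 2 / 2)) := by gcongr; exact hp u
    _ = M * exp (-(u ^ 2 / 4)) := by rw [mul_assoc, ← exp_add]; ring_nf

lemma iteratedDeriv_heatG_sub {t : ℝ} (ht : 0 < t) (y : ℝ) (l : ℕ) (x : ℝ) :
    iteratedDeriv l (fun x' => heatG t (x' - y)) x =
      (√(4 * π * t))⁻¹ * (√(2 * t))⁻¹ ^ l *
        iteratedDeriv l (fun u => exp (-(u ^ 2 / 2))) ((√(2 * t))⁻¹ * (x - y)) := by
  set a := (√(2 * t))⁻¹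
  have h_heatG : (fun x' => heatG t (x' - y)) =
      fun x' => (√(4 * π * t))⁻¹ * (fun z => exp (-((a * z) ^ 2 / 2))) (x' - y) := by
    ext x'
    have ha : a ^ 2 = (2 * t)⁻¹ := by rw [inv_pow, sq_sqrt (by positivity)]
    simp only [heatG, mul_pow, ha]
    congr 2
    field_simp
    ring
  have h_smooth : ContDiff ℝ l (fun u : ℝ => exp (-(u ^ 2 / 2))) := by fun_prop
  rw [h_heatG, iteratedDeriv_const_mul_field,
    iteratedDeriv_comp_sub_const l (fun z => exp (-((a * z) ^ 2 / 2))) y,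
    iteratedDeriv_comp_const_mul h_smooth]
  simp only [mul_assoc]

lemma exp_neg_sub_sq_div_eq (c x y : ℝ) :
    exp (-((x - y) ^ 2 / c)) = exp (-c⁻¹ * (y - x) ^ 2) := by
  congr 1; ring

lemma integrable_exp_neg_sub_sq_div {c : ℝ} (hc : 0 < c) (x : ℝ) :
    Integrable fun y => exp (-((x - y) ^ 2 / c)) := by
  simp only [exp_neg_sub_sq_div_eq c x]
  exact (integrable_exp_neg_mul_sq (inv_pos.2 hc)).comp_sub_right x

lemma integral_exp_neg_sub_sq_div (c x : ℝ) :
    ∫ y, exp (-((x - y) ^ 2 / c)) = √(π * c) := by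
  simp only [exp_neg_sub_sq_div_eq c x]
  rw [integral_sub_right_eq_self (fun y => exp (-c⁻¹ * y ^ 2)) x, integral_gaussian, div_inv_eq_mul]

lemma continuous_one_add_abs_rpow (r : ℝ) : Continuous fun y : ℝ => (1 + |y|) ^ r :=
  (continuous_const.add continuous_abs).rpow_const fun y =>
    Or.inl (by positivity : (0 : ℝ) < 1 + |y|).ne'

lemma one_add_abs_rpow_neg_le_one {β : ℝ} (hβ : 0 ≤ β) (y : ℝ) : (1 + |y|) ^ (-β) ≤ 1 :=
  rpow_le_one_of_one_le_of_nonpos (by linarith [abs_nonneg y]) (by linarith)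

lemma MeasureTheory.Integrable.one_add_abs_rpow_neg_mul {β : ℝ} (hβ : 0 ≤ β) {E : ℝ → ℝ}
    (hE : Integrable E) : Integrable fun y => (1 + |y|) ^ (-β) * E y :=
  hE.bdd_mul (continuous_one_add_abs_rpow _).aestronglyMeasurable <|
    Eventually.of_forall fun y => by
      rw [norm_of_nonneg (by positivity)]
      exact one_add_abs_rpow_neg_le_one hβ y

lemma intervalIntegral_one_add_abs_rpow_neg {s : ℝ} (hs : 0 ≤ s) (β : ℝ) :
    ∫ y in -s..s, (1 + |y|) ^ (-β) = 2 * ∫ u in (0 : ℝ)..s, (1 + u) ^ (-β) := by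
  have h_cont := continuous_one_add_abs_rpow (-β)
  have h_pos : ∫ u in (0 : ℝ)..s, (1 + |u|) ^ (-β) = ∫ u in (0 : ℝ)..s, (1 + u) ^ (-β) :=
    integral_congr fun u hu => by
      rw [Set.uIcc_of_le hs] at hu
      simp only [abs_of_nonneg hu.1]
  have h_neg : ∫ y in -s..0, (1 + |y|) ^ (-β) = ∫ u in (0 : ℝ)..s, (1 + |u|) ^ (-β) := by
    simpa using (integral_comp_neg (a := 0) (b := s) fun y => (1 + |y|) ^ (-β)).symm
  rw [← integral_add_adjacent_intervals (b := 0) (h_cont.intervalIntegrable _ _)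
    (h_cont.intervalIntegrable _ _), h_neg, h_pos, two_mul]

lemma integral_one_add_abs_rpow_neg_mul_le {β s : ℝ} (hβ : 0 ≤ β) (hs : 0 ≤ s) {E : ℝ → ℝ}
    (hE : Integrable E) (hE0 : ∀ y, 0 ≤ E y) (hE1 : ∀ y, E y ≤ 1) :
    ∫ y, (1 + |y|) ^ (-β) * E y ≤
      2 * (∫ u in (0 : ℝ)..s, (1 + u) ^ (-β)) + (1 + s) ^ (-β) * ∫ y, E y := by
  set w : ℝ → ℝ := fun y => (1 + |y|) ^ (-β)
  have hw_cont : Continuous w := continuous_one_add_abs_rpow (-β)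
  have hw0 : ∀ y, 0 ≤ w y := fun y => by positivity
  have hwE : Integrable fun y => w y * E y := hE.one_add_abs_rpow_neg_mul hβ
  set I := Set.Ioc (-s) s
  have h_in : ∫ y in I, w y * E y ≤ 2 * ∫ u in (0 : ℝ)..s, (1 + u) ^ (-β) := by
    rw [← intervalIntegral_one_add_abs_rpow_neg hs, integral_of_le (by linarith)]
    exact setIntegral_mono_on hwE.integrableOn hw_cont.integrableOn_Ioc measurableSet_Ioc
      fun y _ => mul_le_of_le_one_right (hw0 y) (hE1 y)
  have h_out : ∫ y in Iᶜ, w y * E y ≤ (1 + s) ^ (-β) * ∫ y, E y := by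
    have h_far : ∀ y ∈ Iᶜ, w y * E y ≤ (1 + s) ^ (-β) * E y := fun y hy => by
      have hsy : s ≤ |y| := by
        simp only [I, Set.mem_compl_iff, Set.mem_Ioc, not_and, not_le] at hy
        rcases le_or_gt y (-s) with h | h
        · exact (le_neg.2 h).trans (neg_le_abs y)
        · exact (hy h).le.trans (le_abs_self y)
      exact mul_le_mul_of_nonneg_right
        (rpow_le_rpow_of_nonpos (by positivity) (by linarith) (by linarith)) (hE0 y)
    calc ∫ y in Iᶜ, w y * E y ≤ ∫ y in Iᶜ, (1 + s) ^ (-β) * E y :=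
          setIntegral_mono_on hwE.integrableOn (hE.const_mul _).integrableOn
            measurableSet_Ioc.compl h_far
      _ ≤ (1 + s) ^ (-β) * ∫ y, E y := by
          rw [MeasureTheory.integral_const_mul]
          exact mul_le_mul_of_nonneg_left
            (setIntegral_le_integral hE (Eventually.of_forall hE0)) (by positivity)
  rw [← integral_add_compl measurableSet_Ioc hwE]
  exact add_le_add h_in h_out

lemma integral_one_add_rpow_neg_le {β : ℝ} (hβ : β < 1) (s : ℝ) :
    ∫ u in (0 : ℝ)..s, (1 + u) ^ (-β) ≤ (1 + s) ^ (1 - β) / (1 - β) := by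
  rw [integral_comp_add_left (fun u => u ^ (-β)), integral_rpow (Or.inl (by linarith)),
    add_zero, one_rpow, neg_add_eq_sub]
  gcongr
  linarith

lemma integral_one_add_rpow_neg_one {s : ℝ} (hs : 0 ≤ s) :
    ∫ u in (0 : ℝ)..s, (1 + u) ^ (-(1 : ℝ)) = log (1 + s) := by
  simp only [rpow_neg_one]
  rw [integral_comp_add_left (fun u => u⁻¹), integral_inv_of_pos (by norm_num) (by positivity),
    add_zero, div_one]

lemma rpow_neg_le_two_rpow_mul_one_add {t : ℝ} (ht : 1 ≤ t) {a : ℝ} (ha : 0 ≤ a) :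
    t ^ (-a) ≤ 2 ^ a * (1 + t) ^ (-a) := by
  calc t ^ (-a) ≤ ((1 + t) / 2) ^ (-a) :=
        rpow_le_rpow_of_nonpos (by positivity) (by linarith) (by linarith)
    _ = 2 ^ a * (1 + t) ^ (-a) := by
        rw [div_rpow (by positivity) (by norm_num), rpow_neg (by norm_num : (0 : ℝ) ≤ 2)]
        field_simp

lemma exists_abs_iteratedDeriv_heatG_sub_le (l : ℕ) :
    ∃ M > 0, ∀ t > 0, ∀ x y : ℝ,
      |iteratedDeriv l (fun x' => heatG t (x' - y)) x| ≤
        M * t ^ (-((l : ℝ) + 1) / 2) * exp (-((x - y) ^ 2 / (8 * t))) := by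
  obtain ⟨M, hM, h_gauss⟩ := exists_abs_iteratedDeriv_gaussian_le l
  refine ⟨M, hM, fun t ht x y => ?_⟩
  have h_scale : (√(4 * π * t))⁻¹ * (√(2 * t))⁻¹ ^ l ≤ t ^ (-((l : ℝ) + 1) / 2) := by
    calc (√(4 * π * t))⁻¹ * (√(2 * t))⁻¹ ^ l ≤ (√t)⁻¹ * (√t)⁻¹ ^ l := by
          gcongr <;> nlinarith [pi_gt_three]
      _ = t ^ (-((l : ℝ) + 1) / 2) := by
          rw [← pow_succ' (√t)⁻¹ l, sqrt_eq_rpow, ← rpow_neg ht.le, ← rpow_natCast,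
            ← rpow_mul ht.le]
          push_cast
          ring_nf
  have h_rescale : -(((√(2 * t))⁻¹ * (x - y)) ^ 2 / 4) = -((x - y) ^ 2 / (8 * t)) := by
    rw [mul_pow, inv_pow, sq_sqrt (by positivity)]
    field_simp
    ring
  rw [iteratedDeriv_heatG_sub ht, abs_mul, abs_of_nonneg (by positivity)]
  calc _ ≤ t ^ (-((l : ℝ) + 1) / 2) * (M * exp (-((x - y) ^ 2 / (8 * t)))) :=
        mul_le_mul h_scale (by simpa only [h_rescale] using h_gauss ((√(2 * t))⁻¹ * (x - y)))
          (abs_nonneg _) (by positivity)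
    _ = _ := by ring

lemma exists_integral_abs_iteratedDeriv_heatG_sub_mul_le (l : ℕ) {β : ℝ} (hβ : 0 ≤ β) :
    ∃ M > 0, ∀ t > 0, ∀ x : ℝ,
      ∫ y, |iteratedDeriv l (fun x' => heatG t (x' - y)) x| * (1 + |y|) ^ (-β) ≤
        M * t ^ (-((l : ℝ) + 1) / 2) *
          (2 * (∫ u in (0 : ℝ)..√t, (1 + u) ^ (-β)) + (1 + √t) ^ (-β) * √(π * (8 * t))) := by
  obtain ⟨M, hM, h_pointwise⟩ := exists_abs_iteratedDeriv_heatG_sub_le l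
  refine ⟨M, hM, fun t ht x => ?_⟩
  set E := fun y => exp (-((x - y) ^ 2 / (8 * t)))
  have hE : Integrable E := integrable_exp_neg_sub_sq_div (by positivity) x
  have h_split := integral_one_add_abs_rpow_neg_mul_le hβ (sqrt_nonneg t) hE
    (fun y => (exp_pos _).le) (fun y => exp_le_one_iff.2 (by simp only [neg_nonpos]; positivity))
  rw [integral_exp_neg_sub_sq_div] at h_split
  calc ∫ y, |iteratedDeriv l (fun x' => heatG t (x' - y)) x| * (1 + |y|) ^ (-β)
      ≤ ∫ y, M * t ^ (-((l : ℝ) + 1) / 2) * ((1 + |y|) ^ (-β) * E y) := by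
        refine integral_mono_of_nonneg (Eventually.of_forall fun y => by positivity)
          ((hE.one_add_abs_rpow_neg_mul hβ).const_mul _) (Eventually.of_forall fun y => ?_)
        calc _ ≤ M * t ^ (-((l : ℝ) + 1) / 2) * E y * (1 + |y|) ^ (-β) :=
              mul_le_mul_of_nonneg_right (h_pointwise t ht x y) (by positivity)
          _ = _ := by ring
    _ = M * t ^ (-((l : ℝ) + 1) / 2) * ∫ y, (1 + |y|) ^ (-β) * E y :=
        MeasureTheory.integral_const_mul _ _
    _ ≤ _ := mul_le_mul_of_nonneg_left h_split (by positivity)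

lemma exists_integral_abs_iteratedDeriv_heatG_sub_mul_le_of_lt_one (l : ℕ) {β : ℝ}
    (hβ0 : 0 ≤ β) (hβ1 : β < 1) :
    ∃ C > 0, ∀ t : ℝ, 1 ≤ t → ∀ x : ℝ,
      ∫ y, |iteratedDeriv l (fun x' => heatG t (x' - y)) x| * (1 + |y|) ^ (-β) ≤
        C * (1 + t) ^ (-β / 2 - (l : ℝ) / 2) := by
  obtain ⟨M, hM, h_int⟩ := exists_integral_abs_iteratedDeriv_heatG_sub_mul_le l hβ0
  have hβ : 0 < 1 - β := by linarith
  refine ⟨M * (2 / (1 - β) + √(π * 8)) * (2 ^ (1 - β) * 2 ^ ((β + l) / 2)), by positivity,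
    fun t ht x => (h_int t (by linarith) x).trans ?_⟩
  have ht0 : 0 < t := by linarith
  have hs : 1 ≤ √t := one_le_sqrt.2 ht
  have h_bracket : 2 * (∫ u in (0 : ℝ)..√t, (1 + u) ^ (-β)) + (1 + √t) ^ (-β) * √(π * (8 * t)) ≤
      (2 / (1 - β) + √(π * 8)) * (1 + √t) ^ (1 - β) := by
    have h_tail : (1 + √t) ^ (-β) * √(π * (8 * t)) ≤ √(π * 8) * (1 + √t) ^ (1 - β) := by
      rw [← mul_assoc, sqrt_mul (by positivity) t, sub_eq_add_neg, rpow_add (by positivity),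
        rpow_one]
      calc (1 + √t) ^ (-β) * (√(π * 8) * √t) ≤ (1 + √t) ^ (-β) * (√(π * 8) * (1 + √t)) := by
            gcongr; linarith
        _ = _ := by ring
    have h_head := integral_one_add_rpow_neg_le hβ1 (√t)
    calc _ ≤ 2 * ((1 + √t) ^ (1 - β) / (1 - β)) + √(π * 8) * (1 + √t) ^ (1 - β) := by
          gcongr
      _ = _ := by ring
  have h_growth : t ^ (-((l : ℝ) + 1) / 2) * (1 + √t) ^ (1 - β) ≤
      2 ^ (1 - β) * 2 ^ ((β + l) / 2) * (1 + t) ^ (-β / 2 - (l : ℝ) / 2) := by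
    calc t ^ (-((l : ℝ) + 1) / 2) * (1 + √t) ^ (1 - β)
        ≤ t ^ (-((l : ℝ) + 1) / 2) * (2 * √t) ^ (1 - β) := by
          gcongr; linarith
      _ = 2 ^ (1 - β) * t ^ (-((β + l) / 2)) := by
          rw [mul_rpow (by norm_num) (sqrt_nonneg t), sqrt_eq_rpow, ← rpow_mul ht0.le,
            mul_left_comm, ← rpow_add ht0]
          ring_nf
      _ ≤ 2 ^ (1 - β) * (2 ^ ((β + l) / 2) * (1 + t) ^ (-((β + l) / 2))) := by
          gcongr
          exact rpow_neg_le_two_rpow_mul_one_add ht (by positivity)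
      _ = _ := by rw [← mul_assoc]; ring_nf
  calc _ ≤ M * t ^ (-((l : ℝ) + 1) / 2) * ((2 / (1 - β) + √(π * 8)) * (1 + √t) ^ (1 - β)) := by
        gcongr
    _ = M * (2 / (1 - β) + √(π * 8)) * (t ^ (-((l : ℝ) + 1) / 2) * (1 + √t) ^ (1 - β)) := by
        ring
    _ ≤ M * (2 / (1 - β) + √(π * 8)) *
        (2 ^ (1 - β) * 2 ^ ((β + l) / 2) * (1 + t) ^ (-β / 2 - (l : ℝ) / 2)) := by
        gcongr
    _ = _ := by ring

lemma exists_integral_abs_iteratedDeriv_heatG_sub_mul_le_log (l : ℕ) :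
    ∃ C > 0, ∀ t : ℝ, 1 ≤ t → ∀ x : ℝ,
      ∫ y, |iteratedDeriv l (fun x' => heatG t (x' - y)) x| * (1 + |y|) ^ (-(1 : ℝ)) ≤
        C * (1 + t) ^ (-(1 : ℝ) / 2 - (l : ℝ) / 2) * log (2 + t) := by
  obtain ⟨M, hM, h_int⟩ := exists_integral_abs_iteratedDeriv_heatG_sub_mul_le l zero_le_one
  refine ⟨M * (2 + √(π * 8)) * 2 ^ (((l : ℝ) + 1) / 2), by positivity,
    fun t ht x => (h_int t (by linarith) x).trans ?_⟩
  have hs : √t ≤ t := (sqrt_le_left (by linarith)).2 (by nlinarith)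
  have h_log : 1 ≤ log (2 + t) := by
    rw [le_log_iff_exp_le (by linarith)]
    linarith [exp_one_lt_d9]
  have h_bracket :
      2 * (∫ u in (0 : ℝ)..√t, (1 + u) ^ (-(1 : ℝ))) + (1 + √t) ^ (-(1 : ℝ)) * √(π * (8 * t)) ≤
        (2 + √(π * 8)) * log (2 + t) := by
    have h_head : log (1 + √t) ≤ log (2 + t) := log_le_log (by positivity) (by linarith)
    have h_tail : (1 + √t)⁻¹ * √t ≤ 1 := by
      rw [inv_mul_le_one₀ (by positivity)]; linarith
    rw [integral_one_add_rpow_neg_one (sqrt_nonneg t), rpow_neg_one, ← mul_assoc,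
      sqrt_mul (by positivity) t, mul_left_comm]
    nlinarith [sqrt_nonneg (π * 8)]
  have h_growth : t ^ (-((l : ℝ) + 1) / 2) ≤
      2 ^ (((l : ℝ) + 1) / 2) * (1 + t) ^ (-(1 : ℝ) / 2 - (l : ℝ) / 2) := by
    convert rpow_neg_le_two_rpow_mul_one_add ht (a := ((l : ℝ) + 1) / 2) (by positivity) using 2
    · ring
    · ring_nf
  calc _ ≤ M * t ^ (-((l : ℝ) + 1) / 2) * ((2 + √(π * 8)) * log (2 + t)) := by
        gcongr
    _ ≤ M * (2 ^ (((l : ℝ) + 1) / 2) * (1 + t) ^ (-(1 : ℝ) / 2 - (l : ℝ) / 2)) *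
        ((2 + √(π * 8)) * log (2 + t)) := by
        gcongr
    _ = _ := by ring

/-- Estimate (3-11): heat-kernel convolution with a slowly decaying weight. -/
theorem stmt11 (α : ℝ) (hα1 : 1 < α) (hα2 : α ≤ 2) (l : ℕ) :
    ∃ C > (0 : ℝ), ∀ t : ℝ, 1 ≤ t → ∀ x : ℝ,
      (α < 2 →
        (∫ y : ℝ, |iteratedDeriv l (fun x' => heatG t (x' - y)) x| * (1 + |y|) ^ (-(α - 1))) ≤
          C * (1 + t) ^ (-(α - 1) / 2 - (l : ℝ) / 2)) ∧
      (α = 2 →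
        (∫ y : ℝ, |iteratedDeriv l (fun x' => heatG t (x' - y)) x| * (1 + |y|) ^ (-(α - 1))) ≤
          C * (1 + t) ^ (-(1 : ℝ) / 2 - (l : ℝ) / 2) * Real.log (2 + t)) := by
  rcases hα2.lt_or_eq with hα | rfl
  · obtain ⟨C, hC, h_bound⟩ :=
      exists_integral_abs_iteratedDeriv_heatG_sub_mul_le_of_lt_one l (β := α - 1)
        (by linarith) (by linarith)
    exact ⟨C, hC, fun t ht x => ⟨fun _ => h_bound t ht x, fun h => absurd h hα.ne⟩⟩
  · obtain ⟨C, hC, h_bound⟩ := exists_integral_abs_iteratedDeriv_heatG_sub_mul_le_log l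
    refine ⟨C, hC, fun t ht x => ⟨fun h => absurd h (lt_irrefl 2), fun _ => ?_⟩⟩
    rw [show (2 : ℝ) - 1 = 1 by norm_num]
    exact h_bound t ht x
end
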